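/- arXiv:0808.0294 — 5 statements merged into one kernel-verified Lean document; each statement's English description precedes it below -/
import Mathlib

section
/- Let q : (ℤ/2ℤ)^5 → ℚ/2ℤ be defined by q(x) = -wt(x)/2 mod 2ℤ, where wt(x) is the number of nonzero coordinates (this is the discriminant form q_T of T = U⊕U⊕E_8⊕A_1^5). Then the group O(q) of additive automorphisms f of (ℤ/2ℤ)^5 satisfying q(f(x)) = q(x) for all x consists exactly of the coordinate permutations, and hence O(q) is isomorphic to the symmetric group S_5 (i.e. to Equiv.Perm (Fin 5)). -/
/-
`q` only sees the weight modulo `4`, so an isometry `f` preserves weights mod `4`. The image of a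
unit vector `eᵢ` then has weight `≡ 1`, and `f eᵢ + f eₖ = f (eᵢ + eₖ)` has weight `≡ 2`; among
vectors of `(ℤ/2ℤ)⁵` this forces `f eᵢ` to be a unit vector rather than the all-ones vector. An
additive map permuting the unit vectors of `(ℤ/2ℤ)ⁿ` is a coordinate permutation, so
`σ ↦ (x ↦ x ∘ σ⁻¹)` is an isomorphism `S₅ ≃ O(q)`.
-/

/-- Hamming weight: the number of nonzero coordinates of a vector in `(ℤ/2ℤ)⁵`. -/
def wt (v : Fin 5 → ZMod 2) : ℕ := (Finset.univ.filter fun i => v i ≠ 0).card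

/-- The discriminant quadratic form of `T = U ⊕ U ⊕ E₈ ⊕ A₁⁵` on `(ℤ/2ℤ)⁵`:
`q(x) = -wt(x)/2 mod 2ℤ`, with values in `ℚ/2ℤ`. -/
def q (v : Fin 5 → ZMod 2) : AddCircle (2 : ℚ) := ((-(wt v : ℚ) / 2 : ℚ) : AddCircle (2 : ℚ))

/-- Mathlib now makes `AddAut` an additive group; restore the old multiplicative group
structure (composition) that this file used. -/
instance : Group (AddAut (Fin 5 → ZMod 2)) :=
  inferInstanceAs (Group (Multiplicative (AddAut (Fin 5 → ZMod 2))))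

/-- The group `O(q)` of additive automorphisms of `(ℤ/2ℤ)⁵` preserving `q`. -/
def Oq : Subgroup (AddAut (Fin 5 → ZMod 2)) where
  carrier := {f | ∀ x, q (f x) = q x}
  one_mem' := fun _ => rfl
  mul_mem' := by
    intro a b ha hb x
    have : (a * b) x = a (b x) := rfl
    rw [this, ha (b x), hb x]
  inv_mem' := by
    intro a ha x
    have h := ha (a⁻¹ x)
    have : a (a⁻¹ x) = x := by
      show a (a.symm x) = x
      exact a.apply_symm_apply x
    rw [this] at h
    exact h.symm

def coordPerm {ι M : Type*} [Add M] (σ : Equiv.Perm ι) : (ι → M) ≃+ (ι → M) where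
  toFun x := x ∘ σ
  invFun x := x ∘ σ.symm
  left_inv x := by ext; simp
  right_inv x := by ext; simp
  map_add' _ _ := rfl

@[simp]
lemma coordPerm_apply {ι M : Type*} [Add M] (σ : Equiv.Perm ι) (x : ι → M) (i : ι) :
    coordPerm σ x i = x (σ i) :=
  rfl

lemma coordPerm_injective {ι M : Type*} [DecidableEq ι] [AddZeroClass M] [Nontrivial M] :
    Function.Injective (coordPerm : Equiv.Perm ι → (ι → M) ≃+ (ι → M)) := by
  intro σ τ h
  obtain ⟨a, ha⟩ := exists_ne (0 : M)
  ext i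
  by_contra hne
  have := congr_fun (DFunLike.congr_fun h (Pi.single (σ i) a)) i
  simp [Ne.symm hne, ha] at this

lemma single_one_left_injective {ι M : Type*} [DecidableEq ι] [Zero M] [One M] [NeZero (1 : M)] :
    Function.Injective fun i : ι => (Pi.single i (1 : M) : ι → M) :=
  fun i j h => by simpa [Pi.single_apply] using congr_fun h i

lemma exists_eq_coordPerm_of_map_single {ι : Type*} [Finite ι] [DecidableEq ι]
    (f : (ι → ZMod 2) ≃+ (ι → ZMod 2)) (hf : ∀ i, ∃ j, f (Pi.single i 1) = Pi.single j 1) :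
    ∃ σ : Equiv.Perm ι, f = coordPerm σ := by
  choose τ hτ using hf
  have hτ_inj : Function.Injective τ := fun i j h =>
    single_one_left_injective (f.injective ((hτ i).trans (h ▸ (hτ j).symm)))
  let τ' := Equiv.ofBijective τ (Finite.injective_iff_bijective.mp hτ_inj)
  refine ⟨τ'.symm, AddEquiv.toAddMonoidHom_injective ?_⟩
  refine AddMonoidHom.functions_ext _ _ _ fun i x => ?_
  obtain rfl | rfl : x = 0 ∨ x = 1 := by revert x; decide
  · simp
  · have : coordPerm τ'.symm (Pi.single i (1 : ZMod 2)) = Pi.single (τ i) 1 :=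
      Pi.single_comp_equiv τ'.symm i 1
    simpa [this] using hτ i

lemma natCast_wt_eq_of_q_eq {v w : Fin 5 → ZMod 2} (h : q v = q w) :
    (wt v : ZMod 4) = wt w := by
  obtain ⟨k, hk⟩ := AddSubgroup.mem_zmultiples_iff.mp (QuotientAddGroup.eq.mp h)
  rw [ZMod.natCast_eq_natCast_iff, Nat.modEq_iff_dvd]
  refine ⟨-k, ?_⟩
  rw [zsmul_eq_mul] at hk
  have : (wt w : ℚ) - wt v = 4 * -k := by linarith
  exact_mod_cast this

lemma wt_comp_perm (σ : Equiv.Perm (Fin 5)) (x : Fin 5 → ZMod 2) : wt (x ∘ σ) = wt x :=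
  Finset.card_bij' (fun i _ => σ i) (fun j _ => σ.symm j) (by simp) (by simp) (by simp) (by simp)

lemma wt_single (i : Fin 5) : wt (Pi.single i 1) = 1 := by
  revert i; decide

lemma wt_single_add_single {i j : Fin 5} (h : i ≠ j) :
    wt (Pi.single i 1 + Pi.single j 1) = 2 := by
  revert i j; decide

lemma exists_eq_single_of_wt_eq_one {v : Fin 5 → ZMod 2} (h : wt v = 1) :
    ∃ j, v = Pi.single j 1 := by
  revert v; decide

/- The vectors of weight `≡ 1 mod 4` are the unit vectors and the all-ones vector, and the sum of
the all-ones vector with a unit vector has weight `4`. -/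
lemma wt_eq_one_of_natCast_wt_add (u w : Fin 5 → ZMod 2) (hne : u ≠ w)
    (hu : (wt u : ZMod 4) = 1) (hw : (wt w : ZMod 4) = 1) (huw : (wt (u + w) : ZMod 4) = 2) :
    wt u = 1 := by
  revert u w; decide

lemma coordPerm_mem_Oq (σ : Equiv.Perm (Fin 5)) : coordPerm σ ∈ Oq := fun x => by
  simp only [q, coordPerm, AddEquiv.coe_mk, Equiv.coe_fn_mk, wt_comp_perm]

lemma map_single_of_mem_Oq {f : AddAut (Fin 5 → ZMod 2)} (hf : f ∈ Oq) (i : Fin 5) :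
    ∃ j, f (Pi.single i 1) = Pi.single j 1 := by
  have hmod (x : Fin 5 → ZMod 2) : (wt (f x) : ZMod 4) = wt x := natCast_wt_eq_of_q_eq (hf x)
  obtain ⟨k, hki⟩ := exists_ne i
  refine exists_eq_single_of_wt_eq_one
    (wt_eq_one_of_natCast_wt_add _ (f (Pi.single k 1)) ?_ ?_ ?_ ?_)
  · exact f.injective.ne fun h => hki (single_one_left_injective h).symm
  · rw [hmod, wt_single, Nat.cast_one]
  · rw [hmod, wt_single, Nat.cast_one]
  · rw [← map_add, hmod, wt_single_add_single hki.symm, Nat.cast_ofNat]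

theorem mem_Oq_iff_exists_eq_coordPerm (f : AddAut (Fin 5 → ZMod 2)) :
    f ∈ Oq ↔ ∃ σ, f = coordPerm σ :=
  ⟨fun hf => exists_eq_coordPerm_of_map_single f (map_single_of_mem_Oq hf),
    by rintro ⟨σ, rfl⟩; exact coordPerm_mem_Oq σ⟩

/- `σ ↦ coordPerm σ` is an anti-homomorphism. -/
def coordPermHom : Equiv.Perm (Fin 5) →* AddAut (Fin 5 → ZMod 2) where
  toFun σ := coordPerm σ⁻¹
  map_one' := rfl
  map_mul' _ _ := rfl

lemma coordPermHom_injective : Function.Injective coordPermHom :=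
  fun _ _ h => inv_injective (coordPerm_injective h)

lemma range_coordPermHom : coordPermHom.range = Oq := by
  ext f
  rw [MonoidHom.mem_range, mem_Oq_iff_exists_eq_coordPerm]
  constructor
  · rintro ⟨σ, rfl⟩
    exact ⟨σ⁻¹, rfl⟩
  · rintro ⟨σ, rfl⟩
    exact ⟨σ⁻¹, congrArg coordPerm (inv_inv σ)⟩

/-- `O(q)` consists exactly of the coordinate permutations, hence `O(q) ≅ S₅`. -/
theorem Oq_eq_coordinate_permutations_and_iso_S5 :
    (∀ f : AddAut (Fin 5 → ZMod 2),
      f ∈ Oq ↔ ∃ σ : Equiv.Perm (Fin 5), ∀ (x : Fin 5 → ZMod 2) (i : Fin 5), f x i = x (σ i)) ∧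
    Nonempty (Oq ≃* Equiv.Perm (Fin 5)) := by
  refine ⟨fun f => ?_, ⟨(MulEquiv.subgroupCongr range_coordPermHom).symm.trans
    (MonoidHom.ofInjective coordPermHom_injective).symm⟩⟩
  simp only [mem_Oq_iff_exists_eq_coordPerm, AddEquiv.ext_iff, funext_iff, coordPerm_apply]
end

section
/- Let q_S, q_T : (ℤ/2ℤ)^5 → ℚ/2ℤ be defined by q_S(x) = (x̂_1² - x̂_2² - x̂_3² - x̂_4² - x̂_5²)/2 mod 2ℤ and q_T(x) = -(x̂_1² + ⋯ + x̂_5²)/2 mod 2ℤ, where x̂_i ∈ {0,1} lifts x_i (these are the discriminant forms of S = A_1(-1)⊕A_1^4 and T = U⊕U⊕E_8⊕A_1^5). Then there exists an additive group automorphism φ of (ℤ/2ℤ)^5 such that q_S(x) = -q_T(φ(x)) for all x; for instance φ sending e_1 ↦ e_1 and, for j = 1,…,4, sending e_2+e_3+e_4+e_5-e_{j+1} (the sum of the last four standard generators omitting e_{j+1}) to e_{j+1}. -/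
/-!
In `ℚ/2ℤ` the value `a/2` of an integer `a` depends only on `a mod 4`. Writing `|y|` for the
number of nonzero coordinates, `-q_T(y) = |y|/2` and `q_S(x) = (x̂₁ - |x'|)/2` with
`x' = (x₂, …, x₅)`. The map `φ` fixing `x₁` and adding `x₂ + ⋯ + x₅` to each of the last four
coordinates is the transvection `x ↦ x + ⟨v, x⟩ v` for the isotropic vector `v = e₂ + ⋯ + e₅`
(`⟨v, v⟩ = 4 = 0`), hence an automorphism. It leaves `x'` alone when `|x'|` is even and
complements it when `|x'|` is odd; either way `|φ(x)'| ≡ -|x'| mod 4`, which is `q_S = -q_T ∘ φ`.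
-/

/-- The discriminant quadratic form of `S = A₁(-1) ⊕ A₁⁴` on `(ℤ/2ℤ)⁵`, with values in
`ℚ/2ℤ`: `q_S(x) = (x̂₁² - x̂₂² - x̂₃² - x̂₄² - x̂₅²)/2 mod 2ℤ`, where `x̂ᵢ ∈ {0,1}` lifts `xᵢ`. -/
def qS (x : Fin 5 → ZMod 2) : AddCircle (2 : ℚ) :=
  ((((x 0).val ^ 2 : ℚ) - ((x 1).val ^ 2 : ℚ) - ((x 2).val ^ 2 : ℚ)
      - ((x 3).val ^ 2 : ℚ) - ((x 4).val ^ 2 : ℚ)) / 2 : ℚ)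

/-- The discriminant quadratic form of `T = U ⊕ U ⊕ E₈ ⊕ A₁⁵` on `(ℤ/2ℤ)⁵`, with values
in `ℚ/2ℤ`: `q_T(x) = -(x̂₁² + ⋯ + x̂₅²)/2 mod 2ℤ`. -/
def qT (x : Fin 5 → ZMod 2) : AddCircle (2 : ℚ) :=
  ((-(((x 0).val ^ 2 : ℚ) + ((x 1).val ^ 2 : ℚ) + ((x 2).val ^ 2 : ℚ)
      + ((x 3).val ^ 2 : ℚ) + ((x 4).val ^ 2 : ℚ)) / 2 : ℚ))

theorem AddCircle.coe_div_two_eq_of_modEq {a b : ℤ} (h : a ≡ b [ZMOD 4]) :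
    ((a / 2 : ℚ) : AddCircle (2 : ℚ)) = ((b / 2 : ℚ) : AddCircle (2 : ℚ)) := by
  obtain ⟨k, hk⟩ := Int.modEq_iff_dvd.mp h
  rw [← sub_eq_zero, ← AddCircle.coe_sub, AddCircle.coe_eq_zero_iff]
  refine ⟨-k, ?_⟩
  have : (b : ℚ) - a = 4 * k := by exact_mod_cast hk
  rw [zsmul_eq_mul]
  push_cast
  linarith

namespace ZMod

theorem eq_zero_or_eq_one_of_two (a : ZMod 2) : a = 0 ∨ a = 1 := by
  revert a
  decide

theorem natCast_val_sq_of_two {R : Type*} [Semiring R] (a : ZMod 2) :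
    (a.val : R) ^ 2 = a.val := by
  rcases eq_zero_or_eq_one_of_two a with rfl | rfl <;> simp [val_one]

theorem val_add_one_of_two (a : ZMod 2) : ((a + 1).val : ℤ) = 1 - a.val := by
  rcases eq_zero_or_eq_one_of_two a with rfl | rfl <;> rfl

theorem sum_val_add_sum_modEq {ι : Type*} [Fintype ι] (h4 : 4 ∣ Fintype.card ι)
    (y : ι → ZMod 2) :
    ∑ i, ((y i + ∑ j, y j).val : ℤ) ≡ -∑ i, ((y i).val : ℤ) [ZMOD 4] := by
  have hparity : ((∑ i, ((y i).val : ℤ) : ℤ) : ZMod 2) = ∑ j, y j := by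
    simp only [Int.cast_sum, Int.cast_natCast, natCast_zmod_val]
  rcases eq_zero_or_eq_one_of_two (∑ j, y j) with hc | hc
  · rw [hc] at hparity ⊢
    obtain ⟨k, hk⟩ := (intCast_zmod_eq_zero_iff_dvd _ 2).mp hparity
    simp only [add_zero, hk]
    exact Int.modEq_iff_dvd.mpr ⟨-k, by ring⟩
  · obtain ⟨m, hm⟩ := h4
    simp only [hc, val_add_one_of_two, Finset.sum_sub_distrib, Finset.sum_const,
      Finset.card_univ, hm]
    exact Int.modEq_iff_dvd.mpr ⟨-m, by ring⟩

end ZMod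

section
variable {R ι : Type*} [CommRing R] [Fintype ι] {v : ι → R} (hv : v ⬝ᵥ v = 0)

def dotProductTransvection : (ι → R) ≃ₗ[R] (ι → R) :=
  LinearEquiv.transvection (f := dotProductBilin R R v) (v := v) hv

theorem dotProductTransvection_apply (x : ι → R) :
    dotProductTransvection hv x = x + (v ⬝ᵥ x) • v :=
  rfl

theorem dotProductTransvection_single [DecidableEq ι] {i : ι} (hi : v i = 0) :
    dotProductTransvection hv (Pi.single i 1) = Pi.single i 1 := by
  simp [dotProductTransvection_apply, dotProduct_single, hi]

theorem dotProductTransvection_sub_single [DecidableEq ι] {i : ι} (hi : v i = 1) :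
    dotProductTransvection hv (v - Pi.single i 1) = -Pi.single i 1 := by
  simp only [dotProductTransvection_apply, dotProduct_sub, dotProduct_single, hv, hi, mul_one,
    zero_sub, neg_smul, one_smul]
  abel

end

def onesOffZero : Fin 5 → ZMod 2 := fun i => if i = 0 then 0 else 1

theorem onesOffZero_dotProduct (x : Fin 5 → ZMod 2) :
    onesOffZero ⬝ᵥ x = x 1 + x 2 + x 3 + x 4 := by
  simp [onesOffZero, dotProduct, Fin.sum_univ_five]

theorem onesOffZero_dotProduct_self : onesOffZero ⬝ᵥ onesOffZero = 0 := by
  rw [onesOffZero_dotProduct]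
  decide

theorem qS_eq_coe_div_two (x : Fin 5 → ZMod 2) :
    qS x = ((((x 0).val - (x 1).val - (x 2).val - (x 3).val - (x 4).val : ℤ) : ℚ) / 2 : ℚ) := by
  simp only [qS, ZMod.natCast_val_sq_of_two]
  push_cast
  rfl

theorem neg_qT_eq_coe_div_two (x : Fin 5 → ZMod 2) :
    -qT x = ((((x 0).val + (x 1).val + (x 2).val + (x 3).val + (x 4).val : ℤ) : ℚ) / 2 : ℚ) := by
  simp only [qT, ← AddCircle.coe_neg, ZMod.natCast_val_sq_of_two, neg_div, neg_neg]
  push_cast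
  rfl

def tailTransvection : (Fin 5 → ZMod 2) ≃ₗ[ZMod 2] (Fin 5 → ZMod 2) :=
  dotProductTransvection onesOffZero_dotProduct_self

theorem tailTransvection_apply_zero (x : Fin 5 → ZMod 2) : tailTransvection x 0 = x 0 := by
  simp [tailTransvection, dotProductTransvection_apply, onesOffZero]

theorem tailTransvection_apply_of_ne_zero (x : Fin 5 → ZMod 2) {i : Fin 5} (hi : i ≠ 0) :
    tailTransvection x i = x i + (x 1 + x 2 + x 3 + x 4) := by
  simp [tailTransvection, dotProductTransvection_apply, onesOffZero_dotProduct, onesOffZero, hi]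

theorem qS_eq_neg_qT_tailTransvection (x : Fin 5 → ZMod 2) :
    qS x = -qT (tailTransvection x) := by
  rw [qS_eq_coe_div_two, neg_qT_eq_coe_div_two]
  apply AddCircle.coe_div_two_eq_of_modEq
  have hweight := ZMod.sum_val_add_sum_modEq (by simp) ![x 1, x 2, x 3, x 4]
  simp only [Fin.sum_univ_four, Matrix.cons_val] at hweight
  simp (disch := decide) only [tailTransvection_apply_zero, tailTransvection_apply_of_ne_zero]
  unfold Int.ModEq at *
  omega

/-- There is an additive automorphism `φ` of `(ℤ/2ℤ)⁵` with `q_S = -q_T ∘ φ`; one such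
sends `e₁ ↦ e₁` and, for `j = 1, …, 4`, sends `e₂+e₃+e₄+e₅-e_{j+1}` to `e_{j+1}`. -/
theorem qS_iso_neg_qT :
    ∃ φ : (Fin 5 → ZMod 2) ≃+ (Fin 5 → ZMod 2),
      (∀ x, qS x = -qT (φ x)) ∧
      φ (Pi.single 0 1) = Pi.single 0 1 ∧
      ∀ j : Fin 5, j ≠ 0 →
        φ ((fun i => if i = 0 then 0 else 1) - Pi.single j 1) = Pi.single j 1 :=
  ⟨tailTransvection.toAddEquiv, qS_eq_neg_qT_tailTransvection,
    dotProductTransvection_single onesOffZero_dotProduct_self rfl, fun _ hj =>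
    (dotProductTransvection_sub_single onesOffZero_dotProduct_self (if_neg hj)).trans
      (CharTwo.neg_eq _)⟩
end

section
/- Let E_8 be ℤ^8 with its standard negative definite root lattice Gram matrix G. For every r ∈ ℤ^8 with rᵀGr = -2, the orthogonal complement r^⊥ = {x ∈ ℤ^8 : xᵀGr = 0}, with the restricted bilinear form, is a rank-7 lattice isometric to E_7 (the standard negative definite root lattice of rank 7). -/
open Matrix

/-- Gram matrix of the negative definite root lattice whose Dynkin diagram is a chain
on nodes `0, …, n-2` together with an extra node `n-1` attached to node `k`. -/
def gramRoot (n k : ℕ) : Matrix (Fin n) (Fin n) ℤ :=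
  Matrix.of fun i j =>
    if i = j then -2
    else if (((i : ℕ) + 1 = j ∨ (j : ℕ) + 1 = i) ∧ (i : ℕ) + 1 ≠ n ∧ (j : ℕ) + 1 ≠ n) ∨
        ((i : ℕ) + 1 = n ∧ (j : ℕ) = k) ∨ ((j : ℕ) + 1 = n ∧ (i : ℕ) = k) then 1
    else 0

/-- Gram matrix of the standard negative definite root lattice `E₈`. -/
def gramE8 : Matrix (Fin 8) (Fin 8) ℤ := gramRoot 8 2

/-- Gram matrix of the standard negative definite root lattice `E₇`. -/
def gramE7 : Matrix (Fin 7) (Fin 7) ℤ := gramRoot 7 2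

/-!
The isometries of `E₈` act transitively on its roots. For roots `r ≠ ±s`, negative definiteness
applied to `r ± s` forces `B(r, s) ∈ {-1, 0, 1}`; if `B(r, s) = -1` the reflection in the root
`r - s` maps `r` to `s`, and `B(r, s) = 1` reduces to this after replacing `s` by `-s`. Since the
Dynkin diagram is connected, all simple roots `eᵢ` lie in one orbit, and every root pairs
nontrivially with some `eᵢ`. It therefore suffices to treat `r = e₀`, for which seven explicit
roots spanning `e₀^⊥` have Gram matrix `E₇`.
-/

open Function

theorem Matrix.mulVec_injective_of_mul_eq_one {m n R : Type*} [Fintype m] [Fintype n]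
    [DecidableEq n] [Semiring R] {A : Matrix m n R} {N : Matrix n m R} (h : N * A = 1) :
    Injective (A *ᵥ ·) :=
  LeftInverse.injective (g := (N *ᵥ ·)) fun x => by
    dsimp only
    rw [mulVec_mulVec, h, one_mulVec]

namespace LinearMap.BilinForm

theorem exists_apply_basis_ne_zero {R M ι : Type*} [CommSemiring R] [AddCommMonoid M]
    [Module R M] (B : LinearMap.BilinForm R M) (b : Module.Basis ι R M) {x : M}
    (hx : B x x ≠ 0) : ∃ i, B x (b i) ≠ 0 := by
  by_contra! h
  have hBx : B x = 0 := b.ext (by simpa using h)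
  exact hx (by simp [hBx])

variable {M : Type*} [AddCommGroup M] {B : LinearMap.BilinForm ℤ M}

def rootReflection (hB : B.IsSymm) {s : M} (hs : B s s = -2) : B.IsometryEquiv B :=
  { Module.reflection (x := s) (f := -B.flip s) (by simp [hs]) with
    map_app' := fun x y => by
      simp only [LinearEquiv.toFun_eq_coe, Module.reflection_apply, LinearMap.neg_apply,
        flip_apply, neg_smul, sub_neg_eq_add, map_add, map_smul, LinearMap.add_apply,
        LinearMap.smul_apply, smul_eq_mul, hs, hB.eq s y]
      ring }

theorem rootReflection_apply (hB : B.IsSymm) {s : M} (hs : B s s = -2) (x : M) :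
    rootReflection hB hs x = x + B x s • s := by
  change x - (-B.flip s) x • s = _
  simp [sub_eq_add_neg]

variable (B) in
def SameOrbit (x y : M) : Prop :=
  ∃ g : B.IsometryEquiv B, g x = y

theorem SameOrbit.refl (x : M) : B.SameOrbit x x :=
  ⟨.refl B, rfl⟩

theorem SameOrbit.symm {x y : M} : B.SameOrbit x y → B.SameOrbit y x
  | ⟨g, hg⟩ => ⟨g.symm, by rw [← hg]; exact g.toLinearEquiv.symm_apply_apply x⟩

theorem SameOrbit.trans {x y z : M} : B.SameOrbit x y → B.SameOrbit y z → B.SameOrbit x z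
  | ⟨g, hg⟩, ⟨f, hf⟩ => ⟨g.trans f, by rw [← hf, ← hg]; rfl⟩

theorem sameOrbit_self_neg (hB : B.IsSymm) {s : M} (hs : B s s = -2) : B.SameOrbit s (-s) :=
  ⟨rootReflection hB hs, by rw [rootReflection_apply, hs]; module⟩

theorem sameOrbit_of_apply_eq_neg_one (hB : B.IsSymm) {r s : M} (hr : B r r = -2)
    (hs : B s s = -2) (hrs : B r s = -1) : B.SameOrbit r s := by
  have hsub : B (r - s) (r - s) = -2 := by
    simp only [map_sub, LinearMap.sub_apply, hr, hs, hrs, hB.eq s r]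
    norm_num
  refine ⟨rootReflection hB hsub, ?_⟩
  rw [rootReflection_apply, map_sub, hr, hrs]
  module

theorem sameOrbit_of_apply_ne_zero (hB : B.IsSymm) (hdef : ∀ x ≠ 0, B x x < 0) {r s : M}
    (hr : B r r = -2) (hs : B s s = -2) (hrs : B r s ≠ 0) : B.SameOrbit r s := by
  rcases eq_or_ne r s with rfl | hne
  · exact .refl r
  rcases eq_or_ne r (-s) with rfl | hne'
  · exact (sameOrbit_self_neg hB hs).symm
  have hsub : B (r - s) (r - s) = -4 - 2 * B r s := by
    simp only [map_sub, LinearMap.sub_apply, hr, hs, hB.eq s r]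
    ring
  have hadd : B (r + s) (r + s) = -4 + 2 * B r s := by
    simp only [map_add, LinearMap.add_apply, hr, hs, hB.eq s r]
    ring
  have hsub_neg := hdef _ (sub_ne_zero.2 hne)
  have hadd_neg := hdef _ fun h => hne' (eq_neg_of_add_eq_zero_left h)
  rcases (by omega : B r s = -1 ∨ B r s = 1) with h | h
  · exact sameOrbit_of_apply_eq_neg_one hB hr hs h
  · have hneg : B r (-s) = -1 := by simp [h]
    exact (sameOrbit_of_apply_eq_neg_one hB hr (by simpa using hs) hneg).trans
      (sameOrbit_self_neg hB hs).symm

theorem IsometryEquiv.image_setOf_apply_eq_zero (g : B.IsometryEquiv B) (a : M) :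
    g '' {x | B x a = 0} = {x | B x (g a) = 0} := by
  ext x
  constructor
  · rintro ⟨y, hy, rfl⟩
    simpa [g.map_app] using hy
  · intro hx
    have hgx : g (g.symm x) = x := g.toLinearEquiv.apply_symm_apply x
    refine ⟨g.symm x, ?_, hgx⟩
    rw [Set.mem_ofPred_eq, ← g.map_app, hgx]
    exact hx

end LinearMap.BilinForm

namespace E8

open LinearMap.BilinForm

noncomputable def form : LinearMap.BilinForm ℤ (Fin 8 → ℤ) :=
  Matrix.toLinearMap₂' ℤ gramE8

theorem form_apply (x y : Fin 8 → ℤ) : form x y = x ⬝ᵥ gramE8 *ᵥ y :=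
  Matrix.toLinearMap₂'_apply' _ _ _

theorem form_single_single (i j : Fin 8) :
    form (Pi.single i 1) (Pi.single j 1) = gramE8 i j := by
  simp [form_apply]

theorem form_single_self (i : Fin 8) : form (Pi.single i 1) (Pi.single i 1) = -2 := by
  rw [form_single_single]
  revert i
  decide

theorem gramE8_isSymm : gramE8.IsSymm := by
  decide

theorem form_isSymm : form.IsSymm :=
  (isSymm_iff_basis (Pi.basisFun ℤ (Fin 8))).2 fun i j => by
    simp only [Pi.basisFun_apply, form_single_single]
    exact congrFun (congrFun gramE8_isSymm.symm i) j

/-- Its columns are twice the simple roots of `E₈` in the standard coordinates of `ℝ⁸`, so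
`-4 B(x, x) = |A x|²`. -/
def doubledSimpleRoots : Matrix (Fin 8) (Fin 8) ℤ :=
  !![1, -2, 0, 0, 0, 0, 0, 2; -1, 2, -2, 0, 0, 0, 0, 2; -1, 0, 2, -2, 0, 0, 0, 0;
     -1, 0, 0, 2, -2, 0, 0, 0; -1, 0, 0, 0, 2, -2, 0, 0; -1, 0, 0, 0, 0, 2, -2, 0;
     -1, 0, 0, 0, 0, 0, 2, 0; 1, 0, 0, 0, 0, 0, 0, 0]

theorem doubledSimpleRoots_transpose_mul_self :
    doubledSimpleRootsᵀ * doubledSimpleRoots = (-4 : ℤ) • gramE8 := by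
  decide

def gramE8Inv : Matrix (Fin 8) (Fin 8) ℤ :=
  !![-4, -7, -10, -8, -6, -4, -2, -5; -7, -14, -20, -16, -12, -8, -4, -10;
     -10, -20, -30, -24, -18, -12, -6, -15; -8, -16, -24, -20, -15, -10, -5, -12;
     -6, -12, -18, -15, -12, -8, -4, -9; -4, -8, -12, -10, -8, -6, -3, -6;
     -2, -4, -6, -5, -4, -3, -2, -3; -5, -10, -15, -12, -9, -6, -3, -8]

theorem gramE8Inv_mul_gramE8 : gramE8Inv * gramE8 = 1 := by
  decide

theorem form_self_neg {x : Fin 8 → ℤ} (hx : x ≠ 0) : form x x < 0 := by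
  set A := doubledSimpleRoots
  have hsq : (A *ᵥ x) ⬝ᵥ (A *ᵥ x) = -4 * form x x := by
    rw [dotProduct_mulVec, ← vecMul_transpose, vecMul_vecMul, ← dotProduct_mulVec,
      doubledSimpleRoots_transpose_mul_self, smul_mulVec, dotProduct_smul, smul_eq_mul,
      form_apply]
  have hAx : A *ᵥ x ≠ 0 := by
    intro h
    have hGx : (-4 : ℤ) • (gramE8 *ᵥ x) = 0 := by
      rw [← smul_mulVec, ← doubledSimpleRoots_transpose_mul_self, ← mulVec_mulVec, h,
        mulVec_zero]
    refine hx (mulVec_injective_of_mul_eq_one gramE8Inv_mul_gramE8 ?_)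
    simpa using (smul_eq_zero.1 hGx).resolve_left (by norm_num)
  have hpos : 0 < (A *ᵥ x) ⬝ᵥ (A *ᵥ x) := by
    simpa using dotProduct_star_self_pos_iff.2 hAx
  linarith

theorem sameOrbit_single_of_gramE8_eq_one {i j : Fin 8} (h : gramE8 i j = 1) :
    form.SameOrbit (Pi.single i 1) (Pi.single j 1) :=
  sameOrbit_of_apply_ne_zero form_isSymm (fun _ => form_self_neg) (form_single_self i)
    (form_single_self j) (by rw [form_single_single, h]; decide)

theorem sameOrbit_single_zero (j : Fin 8) :
    form.SameOrbit (Pi.single 0 1) (Pi.single j 1) := by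
  have edge (i j : Fin 8) (h : gramE8 i j = 1) := sameOrbit_single_of_gramE8_eq_one h
  have h1 := edge 0 1 (by decide)
  have h2 := h1.trans (edge 1 2 (by decide))
  have h3 := h2.trans (edge 2 3 (by decide))
  have h4 := h3.trans (edge 3 4 (by decide))
  have h5 := h4.trans (edge 4 5 (by decide))
  have h6 := h5.trans (edge 5 6 (by decide))
  have h7 := h2.trans (edge 2 7 (by decide))
  fin_cases j
  exacts [.refl _, h1, h2, h3, h4, h5, h6, h7]

theorem sameOrbit_single_zero_of_root {r : Fin 8 → ℤ} (hr : form r r = -2) :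
    form.SameOrbit (Pi.single 0 1) r := by
  obtain ⟨j, hj⟩ := form.exists_apply_basis_ne_zero (Pi.basisFun ℤ (Fin 8)) (x := r)
    (by rw [hr]; decide)
  rw [Pi.basisFun_apply] at hj
  exact (sameOrbit_single_zero j).trans
    (sameOrbit_of_apply_ne_zero form_isSymm (fun _ => form_self_neg) hr (form_single_self j) hj).symm

/-- Its columns are `e₆, e₅, e₄, e₃, e₂, e₇` and `e₀ + 2e₁ + 2e₂ + e₃ + e₇`: the simple roots
orthogonal to `e₀` only span an `A₆`, hence the last, non-simple root. -/
def e7Embedding : Matrix (Fin 8) (Fin 7) ℤ :=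
  !![0, 0, 0, 0, 0, 0, 1; 0, 0, 0, 0, 0, 0, 2; 0, 0, 0, 0, 1, 0, 2; 0, 0, 0, 1, 0, 0, 1;
     0, 0, 1, 0, 0, 0, 0; 0, 1, 0, 0, 0, 0, 0; 1, 0, 0, 0, 0, 0, 0; 0, 0, 0, 0, 0, 1, 1]

def e7Retraction : Matrix (Fin 7) (Fin 8) ℤ :=
  !![0, 0, 0, 0, 0, 0, 1, 0; 0, 0, 0, 0, 0, 1, 0, 0; 0, 0, 0, 0, 1, 0, 0, 0;
     -1, 0, 0, 1, 0, 0, 0, 0; -2, 0, 1, 0, 0, 0, 0, 0; -1, 0, 0, 0, 0, 0, 0, 1;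
     1, 0, 0, 0, 0, 0, 0, 0]

theorem e7Embedding_transpose_mul_gramE8_mul :
    e7Embeddingᵀ * gramE8 * e7Embedding = gramE7 := by
  decide

theorem e7Retraction_mul_e7Embedding : e7Retraction * e7Embedding = 1 := by
  decide

theorem e7Embedding_mul_e7Retraction :
    e7Embedding * e7Retraction = 1 - vecMulVec (Pi.single 1 1) (gramE8 *ᵥ Pi.single 0 1) := by
  decide

theorem gramE8_mulVec_single_zero_vecMul_e7Embedding :
    (gramE8 *ᵥ Pi.single 0 1) ᵥ* e7Embedding = 0 := by
  decide

theorem form_e7Embedding (x y : Fin 7 → ℤ) :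
    form (e7Embedding *ᵥ x) (e7Embedding *ᵥ y) = x ⬝ᵥ gramE7 *ᵥ y := by
  rw [form_apply, dotProduct_mulVec, ← vecMul_transpose, vecMul_vecMul, ← dotProduct_mulVec,
    mulVec_mulVec, e7Embedding_transpose_mul_gramE8_mul]

theorem range_e7Embedding :
    Set.range (e7Embedding *ᵥ ·) = {x | form x (Pi.single 0 1) = 0} := by
  ext x
  simp only [Set.mem_range, Set.mem_ofPred_eq, form_apply]
  constructor
  · rintro ⟨v, rfl⟩
    rw [dotProduct_comm, dotProduct_mulVec, gramE8_mulVec_single_zero_vecMul_e7Embedding,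
      zero_dotProduct]
  · intro hx
    refine ⟨e7Retraction *ᵥ x, ?_⟩
    rw [mulVec_mulVec, e7Embedding_mul_e7Retraction, sub_mulVec, one_mulVec, vecMulVec_mulVec,
      dotProduct_comm, hx]
    simp

end E8

open LinearMap.BilinForm

/-- For every root `r` of `E₈` (a vector with `B(r,r) = -2`), the orthogonal complement
`r^⊥ = {x ∈ ℤ⁸ : B(x,r) = 0}` with the restricted form is a rank-7 lattice isometric
to `E₇`: there is an injective linear map `ℤ⁷ → ℤ⁸` with image `r^⊥` carrying the `E₇`
form to the restriction of the `E₈` form. -/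
theorem root_complement_in_E8_is_E7 (r : Fin 8 → ℤ) (hr : r ⬝ᵥ gramE8.mulVec r = -2) :
    ∃ φ : (Fin 7 → ℤ) →ₗ[ℤ] (Fin 8 → ℤ),
      Function.Injective φ ∧
      Set.range φ = {x : Fin 8 → ℤ | x ⬝ᵥ gramE8.mulVec r = 0} ∧
      ∀ x y : Fin 7 → ℤ, (φ x) ⬝ᵥ gramE8.mulVec (φ y) = x ⬝ᵥ gramE7.mulVec y := by
  obtain ⟨g, hg⟩ := E8.sameOrbit_single_zero_of_root (r := r) (by rwa [E8.form_apply])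
  refine ⟨(g : (Fin 8 → ℤ) ≃ₗ[ℤ] (Fin 8 → ℤ)) ∘ₗ E8.e7Embedding.mulVecLin,
    g.injective.comp (mulVec_injective_of_mul_eq_one E8.e7Retraction_mul_e7Embedding), ?_, ?_⟩
  · rw [LinearMap.coe_comp, Set.range_comp, coe_mulVecLin, E8.range_e7Embedding,
      LinearEquiv.coe_coe, IsometryEquiv.coe_toLinearEquiv,
      IsometryEquiv.image_setOf_apply_eq_zero, hg]
    simp only [E8.form_apply]
  · intro x y
    simpa [← E8.form_apply] using E8.form_e7Embedding x y
end

section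
/- The lattice T = U⊕U⊕E_8⊕A_1^5 is isometric to U⊕U(2)⊕A_1⊕D_4⊕E_8: there exists P ∈ GL(17,ℤ) with PᵀG_1P = G_2, where G_1 is the block-diagonal Gram matrix of U⊕U⊕E_8⊕A_1^5 and G_2 that of U⊕U(2)⊕A_1⊕D_4⊕E_8. -/
/-! Isometry of lattices given by Gram matrices is congruence by a matrix invertible over `ℤ`.
It is an equivalence relation compatible with orthogonal sums, and orthogonal sums are commutative
and associative up to it. As `U` and `E₈` occur on both sides, the claim reduces to the rank-`7`
isometry `U ⊕ A₁⁵ ≅ U(2) ⊕ A₁ ⊕ D₄`, for which an explicit change of basis is given. -/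

open Matrix

/-- Gram matrix of the hyperbolic plane `U`. -/
def gramU : Matrix (Fin 2) (Fin 2) ℤ := !![0, 1; 1, 0]

/-- Gram matrix of `U(2)`. -/
def gramU2 : Matrix (Fin 2) (Fin 2) ℤ := !![0, 2; 2, 0]

/-- Gram matrix of `A₁`. -/
def gramA1 : Matrix (Fin 1) (Fin 1) ℤ := !![-2]

/-- Gram matrix of the standard negative definite root lattice `D₄`. -/
def gramD4 : Matrix (Fin 4) (Fin 4) ℤ := gramRoot 4 1

/-- Gram matrix of the standard negative definite root lattice `D₆`. -/
def gramD6 : Matrix (Fin 6) (Fin 6) ℤ := gramRoot 6 1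

/-- Gram matrix of the standard negative definite root lattice `D₁₂`. -/
def gramD12 : Matrix (Fin 12) (Fin 12) ℤ := gramRoot 12 1

/-- Orthogonal (block diagonal) sum of two Gram matrices. -/
def blockSum {m n : ℕ} (A : Matrix (Fin m) (Fin m) ℤ) (B : Matrix (Fin n) (Fin n) ℤ) :
    Matrix (Fin (m + n)) (Fin (m + n)) ℤ :=
  Matrix.of fun i j =>
    if hi : (i : ℕ) < m then
      if hj : (j : ℕ) < m then A ⟨i, hi⟩ ⟨j, hj⟩ else 0
    else
      if hj : (j : ℕ) < m then 0
      else B ⟨(i : ℕ) - m, by have := i.isLt; omega⟩ ⟨(j : ℕ) - m, by have := j.isLt; omega⟩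

/-- Gram matrix of `T = U ⊕ U ⊕ E₈ ⊕ A₁⁵`. -/
def gramT : Matrix (Fin 17) (Fin 17) ℤ :=
  blockSum gramU (blockSum gramU (blockSum gramE8 (Matrix.diagonal fun _ : Fin 5 => (-2 : ℤ))))

/-- Gram matrix of `U ⊕ U(2) ⊕ A₁ ⊕ D₄ ⊕ E₈`. -/
def gramT' : Matrix (Fin 17) (Fin 17) ℤ :=
  blockSum gramU (blockSum gramU2 (blockSum gramA1 (blockSum gramD4 gramE8)))

namespace Matrix

variable {R : Type*} [CommSemiring R] {l m n o p : Type*}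
  [Fintype l] [DecidableEq l] [Fintype m] [DecidableEq m] [Fintype n] [DecidableEq n]
  [Fintype o] [DecidableEq o] [Fintype p] [DecidableEq p]

def IsCongruent (A : Matrix m m R) (B : Matrix n n R) : Prop :=
  ∃ (P : Matrix m n R) (Q : Matrix n m R), P * Q = 1 ∧ Q * P = 1 ∧ Pᵀ * A * P = B

namespace IsCongruent

theorem refl (A : Matrix m m R) : IsCongruent A A :=
  ⟨1, 1, mul_one 1, mul_one 1, by simp⟩

theorem symm {A : Matrix m m R} {B : Matrix n n R} (h : IsCongruent A B) : IsCongruent B A := by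
  obtain ⟨P, Q, hPQ, hQP, rfl⟩ := h
  refine ⟨Q, P, hQP, hPQ, ?_⟩
  calc Qᵀ * (Pᵀ * A * P) * Q = (P * Q)ᵀ * A * (P * Q) := by
        simp only [transpose_mul, Matrix.mul_assoc]
    _ = A := by simp [hPQ]

theorem trans {A : Matrix l l R} {B : Matrix m m R} {C : Matrix n n R}
    (hAB : IsCongruent A B) (hBC : IsCongruent B C) : IsCongruent A C := by
  obtain ⟨P, Q, hPQ, hQP, rfl⟩ := hAB
  obtain ⟨P', Q', hPQ', hQP', rfl⟩ := hBC
  refine ⟨P * P', Q' * Q, ?_, ?_, ?_⟩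
  · rw [Matrix.mul_assoc, ← Matrix.mul_assoc P', hPQ', Matrix.one_mul, hPQ]
  · rw [Matrix.mul_assoc, ← Matrix.mul_assoc Q, hQP, Matrix.one_mul, hQP']
  · simp only [transpose_mul, Matrix.mul_assoc]

instance : @Trans (Matrix l l R) (Matrix m m R) (Matrix n n R) IsCongruent IsCongruent
    IsCongruent :=
  ⟨trans⟩

theorem of_mul_eq_one {A B : Matrix m m R} (P Q : Matrix m m R) (hPQ : P * Q = 1)
    (hP : Pᵀ * A * P = B) : IsCongruent A B :=
  ⟨P, Q, hPQ, mul_eq_one_comm.mp hPQ, hP⟩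

theorem submatrix_equiv (A : Matrix m m R) (e : n ≃ m) : IsCongruent A (A.submatrix e e) := by
  refine ⟨(1 : Matrix m m R).submatrix id e, (1 : Matrix m m R).submatrix e id, ?_, ?_, ?_⟩
  · ext i j
    simpa [mul_apply, one_apply] using
      e.sum_comp fun k => if k = j then if i = k then (1 : R) else 0 else 0
  · ext i j; simp [mul_apply, one_apply]
  · ext i j; simp [mul_apply, one_apply]

theorem fromBlocks {A : Matrix m m R} {A' : Matrix n n R} {B : Matrix o o R}
    {B' : Matrix p p R} (hA : IsCongruent A A') (hB : IsCongruent B B') :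
    IsCongruent (fromBlocks A 0 0 B) (fromBlocks A' 0 0 B') := by
  obtain ⟨P, Q, hPQ, hQP, rfl⟩ := hA
  obtain ⟨P', Q', hPQ', hQP', rfl⟩ := hB
  refine ⟨Matrix.fromBlocks P 0 0 P', Matrix.fromBlocks Q 0 0 Q', ?_, ?_, ?_⟩ <;>
    simp [fromBlocks_transpose, fromBlocks_multiply, hPQ, hQP, hPQ', hQP', fromBlocks_one]

end IsCongruent

theorem isCongruent_fromBlocks_comm (A : Matrix m m R) (B : Matrix n n R) :
    IsCongruent (fromBlocks A 0 0 B) (fromBlocks B 0 0 A) := by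
  simpa using IsCongruent.submatrix_equiv (fromBlocks A 0 0 B) (Equiv.sumComm n m)

theorem isCongruent_fromBlocks_assoc (A : Matrix m m R) (B : Matrix n n R) (C : Matrix o o R) :
    IsCongruent (fromBlocks A 0 0 (fromBlocks B 0 0 C))
      (fromBlocks (fromBlocks A 0 0 B) 0 0 C) := by
  convert IsCongruent.submatrix_equiv _ (Equiv.sumAssoc m n o) using 1
  ext ((i | i) | i) ((j | j) | j) <;> rfl

end Matrix

section blockSum

variable {k l m n : ℕ}

theorem blockSum_eq_submatrix_fromBlocks (A : Matrix (Fin m) (Fin m) ℤ)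
    (B : Matrix (Fin n) (Fin n) ℤ) :
    blockSum A B = (fromBlocks A 0 0 B).submatrix finSumFinEquiv.symm finSumFinEquiv.symm := by
  ext i j
  induction i using Fin.addCases <;> induction j using Fin.addCases <;> simp [blockSum]

theorem isCongruent_fromBlocks_blockSum (A : Matrix (Fin m) (Fin m) ℤ)
    (B : Matrix (Fin n) (Fin n) ℤ) : IsCongruent (fromBlocks A 0 0 B) (blockSum A B) := by
  rw [blockSum_eq_submatrix_fromBlocks]
  exact IsCongruent.submatrix_equiv _ _

theorem Matrix.IsCongruent.blockSum {A : Matrix (Fin k) (Fin k) ℤ}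
    {A' : Matrix (Fin l) (Fin l) ℤ} {B : Matrix (Fin m) (Fin m) ℤ}
    {B' : Matrix (Fin n) (Fin n) ℤ} (hA : IsCongruent A A') (hB : IsCongruent B B') :
    IsCongruent (blockSum A B) (blockSum A' B') :=
  ((isCongruent_fromBlocks_blockSum A B).symm.trans (hA.fromBlocks hB)).trans
    (isCongruent_fromBlocks_blockSum A' B')

theorem isCongruent_blockSum_comm (A : Matrix (Fin m) (Fin m) ℤ)
    (B : Matrix (Fin n) (Fin n) ℤ) : IsCongruent (blockSum A B) (blockSum B A) :=
  calc IsCongruent (blockSum A B) (fromBlocks A 0 0 B) :=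
        (isCongruent_fromBlocks_blockSum A B).symm
    IsCongruent _ (fromBlocks B 0 0 A) := isCongruent_fromBlocks_comm A B
    IsCongruent _ (blockSum B A) := isCongruent_fromBlocks_blockSum B A

theorem isCongruent_blockSum_assoc (A : Matrix (Fin l) (Fin l) ℤ)
    (B : Matrix (Fin m) (Fin m) ℤ) (C : Matrix (Fin n) (Fin n) ℤ) :
    IsCongruent (blockSum A (blockSum B C)) (blockSum (blockSum A B) C) :=
  calc IsCongruent (blockSum A (blockSum B C)) (fromBlocks A 0 0 (fromBlocks B 0 0 C)) :=
        (((IsCongruent.refl A).fromBlocks (isCongruent_fromBlocks_blockSum B C)).trans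
          (isCongruent_fromBlocks_blockSum A _)).symm
    IsCongruent _ (fromBlocks (fromBlocks A 0 0 B) 0 0 C) := isCongruent_fromBlocks_assoc A B C
    IsCongruent _ (blockSum (blockSum A B) C) :=
        ((isCongruent_fromBlocks_blockSum A B).fromBlocks (IsCongruent.refl C)).trans
          (isCongruent_fromBlocks_blockSum _ C)

end blockSum

/- Writing `e, f` for the basis of `U` and `x₁, …, x₅` for that of `A₁⁵`, the rows of `Pᵀ` are the
images of the bases of `U(2)`, of `A₁` and of `D₄` (whose branch node is the second):
`2e + 2f - x₁ - x₂ - x₃ - x₄`, `2e + 2f - x₁ - x₂ - x₃ - x₅`; `2e + 2f - x₁ - ⋯ - x₅`;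
`x₃ - f`, `e - x₃`, `f - x₁`, `f - x₂`. -/
theorem isCongruent_U_sum_A1Pow5_U2_sum_A1_sum_D4 :
    IsCongruent (blockSum gramU (diagonal fun _ : Fin 5 => (-2 : ℤ)))
      (blockSum gramU2 (blockSum gramA1 gramD4)) :=
  IsCongruent.of_mul_eq_one
    (!![2, 2, -1, -1, -1, -1, 0;
        2, 2, -1, -1, -1, 0, -1;
        2, 2, -1, -1, -1, -1, -1;
        0, -1, 0, 0, 1, 0, 0;
        1, 0, 0, 0, -1, 0, 0;
        0, 1, -1, 0, 0, 0, 0;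
        0, 1, 0, -1, 0, 0, 0]ᵀ)
    !![1, 1, 1, 1, 1, 0, 1;
       1, 1, 1, 1, 1, 1, 0;
       -1, -1, -1, -1, -1, -1, -1;
       0, -1, -1, -1, 0, 0, 0;
       -1, -2, -2, -2, -2, 0, 0;
       -1, -1, -2, -1, -1, 0, 0;
       -1, -1, -1, -2, -1, 0, 0]
    (by decide) (by decide)

/-- The lattice `T = U ⊕ U ⊕ E₈ ⊕ A₁⁵` is isometric to `U ⊕ U(2) ⊕ A₁ ⊕ D₄ ⊕ E₈`. -/
theorem T_isometric_to_U_U2_A1_D4_E8 :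
    ∃ P : Matrix (Fin 17) (Fin 17) ℤ, IsUnit P.det ∧ Pᵀ * gramT * P = gramT' := by
  set A1Pow5 : Matrix (Fin 5) (Fin 5) ℤ := diagonal fun _ => -2
  have hT : IsCongruent gramT gramT' :=
    calc IsCongruent gramT (blockSum gramU (blockSum gramU (blockSum A1Pow5 gramE8))) :=
          (IsCongruent.refl _).blockSum
            ((IsCongruent.refl _).blockSum (isCongruent_blockSum_comm _ _))
      IsCongruent _ (blockSum gramU (blockSum (blockSum gramU A1Pow5) gramE8)) :=
          (IsCongruent.refl _).blockSum (isCongruent_blockSum_assoc _ _ _)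
      IsCongruent _
          (blockSum gramU (blockSum (blockSum gramU2 (blockSum gramA1 gramD4)) gramE8)) :=
          (IsCongruent.refl _).blockSum
            (isCongruent_U_sum_A1Pow5_U2_sum_A1_sum_D4.blockSum (IsCongruent.refl _))
      IsCongruent _
          (blockSum gramU (blockSum gramU2 (blockSum (blockSum gramA1 gramD4) gramE8))) :=
          (IsCongruent.refl _).blockSum (isCongruent_blockSum_assoc _ _ _).symm
      IsCongruent _ gramT' :=
          (IsCongruent.refl _).blockSum
            ((IsCongruent.refl _).blockSum (isCongruent_blockSum_assoc _ _ _).symm)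
  obtain ⟨P, Q, hPQ, -, hP⟩ := hT
  exact ⟨P, isUnit_det_of_right_inverse hPQ, hP⟩
end

section
/- Let L_K3 = ℤ^22 with the block-diagonal Gram matrix of U⊕U⊕U⊕E_8⊕E_8 (the K3 lattice, the even unimodular lattice of signature (3,19)), and let S = ℤ^5 with Gram diag(2,-2,-2,-2,-2). There exists an injective ℤ-linear map φ : ℤ^5 → ℤ^22 which is an isometric embedding (B_{K3}(φx,φy) = B_S(x,y) for all x,y), whose image is a primitive submodule (ℤ^22/φ(ℤ^5) is torsion-free), and such that the orthogonal complement φ(ℤ^5)^⊥ = {x ∈ ℤ^22 : B_{K3}(x,φ(ℤ^5)) = 0}, with the restricted form, is isometric to T = U⊕U⊕E_8⊕A_1^5. -/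
open Matrix

/-- Gram matrix of `S = A₁(-1) ⊕ A₁⁴`. -/
def gramS : Matrix (Fin 5) (Fin 5) ℤ := Matrix.diagonal ![2, -2, -2, -2, -2]

/-- Gram matrix of the K3 lattice `L_{K3} = U ⊕ U ⊕ U ⊕ E₈ ⊕ E₈`. -/
def gramK3 : Matrix (Fin 22) (Fin 22) ℤ :=
  blockSum gramU (blockSum gramU (blockSum gramU (blockSum gramE8 gramE8)))

/-!
Both embeddings are explicit integer matrices. `embS` sends the generator of `A₁(-1)` to `e + f` in
the third copy of `U` and the generators of `A₁⁴` to four mutually orthogonal roots of the second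
`E₈`; `embT` is the identity on `U ⊕ U ⊕ E₈`, sends the first generator of `A₁⁵` to `f - e` in the
third `U` and the other four to four further mutually orthogonal roots of the second `E₈`.
Every claim is then a finite matrix identity: the Gram matrices pull back correctly, both matrices
have integral left inverses (injectivity, and primitivity of the image of `embS`), and
`embT * retractT + pairingLiftS * (gramK3 * embS)ᵀ = 1` writes every vector orthogonal to the
image of `embS` as a vector in the image of `embT`.
-/

namespace Matrix

variable {R k l n : Type*} [CommRing R] [Fintype k] [Fintype l] [Fintype n]

theorem mulVec_dotProduct_mulVec_mulVec (A : Matrix n k R) (G : Matrix n n R) (B : Matrix n l R)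
    (x : k → R) (y : l → R) : (A *ᵥ x) ⬝ᵥ G *ᵥ (B *ᵥ y) = x ⬝ᵥ (Aᵀ * G * B) *ᵥ y := by
  rw [dotProduct_mulVec, dotProduct_mulVec, ← vecMul_transpose, vecMul_vecMul, vecMul_vecMul,
    dotProduct_mulVec, Matrix.mul_assoc]

theorem mulVec_injective_of_mul_eq_one_s10 [DecidableEq k] {A : Matrix n k R} {L : Matrix k n R}
    (hLA : L * A = 1) : Function.Injective A.mulVec := fun x y h => by
  simpa [mulVec_mulVec, hLA] using congrArg L.mulVec h

theorem mem_range_mulVec_of_smul_mem [DecidableEq k] [IsDomain R] {A : Matrix n k R}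
    {L : Matrix k n R} (hLA : L * A = 1) {x : n → R} {c : R} (hc : c ≠ 0)
    (hcx : c • x ∈ Set.range A.mulVec) : x ∈ Set.range A.mulVec := by
  obtain ⟨y, hy⟩ := hcx
  refine ⟨L *ᵥ x, smul_right_injective (n → R) hc ?_⟩
  calc c • A *ᵥ (L *ᵥ x) = (A * L * A) *ᵥ y := by
        rw [← mulVec_smul, ← mulVec_smul, ← hy, mulVec_mulVec, mulVec_mulVec]
    _ = c • x := by rw [Matrix.mul_assoc, hLA, Matrix.mul_one, hy]

theorem range_mulVec_eq_orthogonal [DecidableEq n] {A : Matrix n k R} {B : Matrix n l R}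
    {G : Matrix n n R} (M : Matrix l n R) (N : Matrix n k R) (hBA : Bᵀ * G * A = 0)
    (hsplit : B * M + N * (G * A)ᵀ = 1) :
    Set.range B.mulVec = {x | ∀ z, x ⬝ᵥ G *ᵥ (A *ᵥ z) = 0} := by
  ext x
  constructor
  · rintro ⟨u, rfl⟩ z
    rw [mulVec_dotProduct_mulVec_mulVec, hBA, zero_mulVec, dotProduct_zero]
  · intro hx
    have hpair : (G * A)ᵀ *ᵥ x = 0 := dotProduct_eq_zero _ fun z => by
      rw [mulVec_transpose, ← dotProduct_mulVec, ← mulVec_mulVec, hx]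
    refine ⟨M *ᵥ x, ?_⟩
    calc B *ᵥ (M *ᵥ x) = (B * M + N * (G * A)ᵀ) *ᵥ x := by
          rw [add_mulVec, ← mulVec_mulVec, ← mulVec_mulVec, hpair, mulVec_zero, add_zero]
      _ = x := by rw [hsplit, one_mulVec]

end Matrix

def embS : Matrix (Fin 22) (Fin 5) ℤ :=
  !![0, 0, 0, 0, 0;
    0, 0, 0, 0, 0;
    0, 0, 0, 0, 0;
    0, 0, 0, 0, 0;
    1, 0, 0, 0, 0;
    1, 0, 0, 0, 0;
    0, 0, 0, 0, 0;
    0, 0, 0, 0, 0;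
    0, 0, 0, 0, 0;
    0, 0, 0, 0, 0;
    0, 0, 0, 0, 0;
    0, 0, 0, 0, 0;
    0, 0, 0, 0, 0;
    0, 0, 0, 0, 0;
    0, 0, -1, 0, 0;
    0, 0, -1, 0, 0;
    0, 1, -1, 0, 0;
    0, 1, -1, 0, 1;
    0, 1, -1, 1, 1;
    0, 1, -1, 0, 1;
    0, 0, 0, 0, 1;
    0, 0, -1, 0, 0]

def embT : Matrix (Fin 22) (Fin 17) ℤ :=
  !![1, 0, 0, 0, 0, 0, 0, 0, 0, 0, 0, 0, 0, 0, 0, 0, 0;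
    0, 1, 0, 0, 0, 0, 0, 0, 0, 0, 0, 0, 0, 0, 0, 0, 0;
    0, 0, 1, 0, 0, 0, 0, 0, 0, 0, 0, 0, 0, 0, 0, 0, 0;
    0, 0, 0, 1, 0, 0, 0, 0, 0, 0, 0, 0, 0, 0, 0, 0, 0;
    0, 0, 0, 0, 0, 0, 0, 0, 0, 0, 0, 0, -1, 0, 0, 0, 0;
    0, 0, 0, 0, 0, 0, 0, 0, 0, 0, 0, 0, 1, 0, 0, 0, 0;
    0, 0, 0, 0, 1, 0, 0, 0, 0, 0, 0, 0, 0, 0, 0, 0, 0;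
    0, 0, 0, 0, 0, 1, 0, 0, 0, 0, 0, 0, 0, 0, 0, 0, 0;
    0, 0, 0, 0, 0, 0, 1, 0, 0, 0, 0, 0, 0, 0, 0, 0, 0;
    0, 0, 0, 0, 0, 0, 0, 1, 0, 0, 0, 0, 0, 0, 0, 0, 0;
    0, 0, 0, 0, 0, 0, 0, 0, 1, 0, 0, 0, 0, 0, 0, 0, 0;
    0, 0, 0, 0, 0, 0, 0, 0, 0, 1, 0, 0, 0, 0, 0, 0, 0;
    0, 0, 0, 0, 0, 0, 0, 0, 0, 0, 1, 0, 0, 0, 0, 0, 0;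
    0, 0, 0, 0, 0, 0, 0, 0, 0, 0, 0, 1, 0, 0, 0, 0, 0;
    0, 0, 0, 0, 0, 0, 0, 0, 0, 0, 0, 0, 0, 1, 1, 2, -1;
    0, 0, 0, 0, 0, 0, 0, 0, 0, 0, 0, 0, 0, 1, 1, 4, -3;
    0, 0, 0, 0, 0, 0, 0, 0, 0, 0, 0, 0, 0, 2, 2, 5, -5;
    0, 0, 0, 0, 0, 0, 0, 0, 0, 0, 0, 0, 0, 2, 1, 4, -4;
    0, 0, 0, 0, 0, 0, 0, 0, 0, 0, 0, 0, 0, 1, 1, 3, -3;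
    0, 0, 0, 0, 0, 0, 0, 0, 0, 0, 0, 0, 0, 0, 1, 2, -2;
    0, 0, 0, 0, 0, 0, 0, 0, 0, 0, 0, 0, 0, 0, 1, 1, -1;
    0, 0, 0, 0, 0, 0, 0, 0, 0, 0, 0, 0, 0, 1, 1, 2, -3]

def retractS : Matrix (Fin 5) (Fin 22) ℤ :=
  !![0, 0, 0, 0, 1, 0, 0, 0, 0, 0, 0, 0, 0, 0, 0, 0, 0, 0, 0, 0, 0, 0;
    0, 0, 0, 0, 0, 0, 0, 0, 0, 0, 0, 0, 0, 0, -1, 0, 1, 0, 0, 0, 0, 0;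
    0, 0, 0, 0, 0, 0, 0, 0, 0, 0, 0, 0, 0, 0, -1, 0, 0, 0, 0, 0, 0, 0;
    0, 0, 0, 0, 0, 0, 0, 0, 0, 0, 0, 0, 0, 0, 0, 0, 0, -1, 1, 0, 0, 0;
    0, 0, 0, 0, 0, 0, 0, 0, 0, 0, 0, 0, 0, 0, 0, 0, -1, 1, 0, 0, 0, 0]

def retractT : Matrix (Fin 17) (Fin 22) ℤ :=
  !![1, 0, 0, 0, 0, 0, 0, 0, 0, 0, 0, 0, 0, 0, 0, 0, 0, 0, 0, 0, 0, 0;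
    0, 1, 0, 0, 0, 0, 0, 0, 0, 0, 0, 0, 0, 0, 0, 0, 0, 0, 0, 0, 0, 0;
    0, 0, 1, 0, 0, 0, 0, 0, 0, 0, 0, 0, 0, 0, 0, 0, 0, 0, 0, 0, 0, 0;
    0, 0, 0, 1, 0, 0, 0, 0, 0, 0, 0, 0, 0, 0, 0, 0, 0, 0, 0, 0, 0, 0;
    0, 0, 0, 0, 0, 0, 1, 0, 0, 0, 0, 0, 0, 0, 0, 0, 0, 0, 0, 0, 0, 0;
    0, 0, 0, 0, 0, 0, 0, 1, 0, 0, 0, 0, 0, 0, 0, 0, 0, 0, 0, 0, 0, 0;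
    0, 0, 0, 0, 0, 0, 0, 0, 1, 0, 0, 0, 0, 0, 0, 0, 0, 0, 0, 0, 0, 0;
    0, 0, 0, 0, 0, 0, 0, 0, 0, 1, 0, 0, 0, 0, 0, 0, 0, 0, 0, 0, 0, 0;
    0, 0, 0, 0, 0, 0, 0, 0, 0, 0, 1, 0, 0, 0, 0, 0, 0, 0, 0, 0, 0, 0;
    0, 0, 0, 0, 0, 0, 0, 0, 0, 0, 0, 1, 0, 0, 0, 0, 0, 0, 0, 0, 0, 0;
    0, 0, 0, 0, 0, 0, 0, 0, 0, 0, 0, 0, 1, 0, 0, 0, 0, 0, 0, 0, 0, 0;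
    0, 0, 0, 0, 0, 0, 0, 0, 0, 0, 0, 0, 0, 1, 0, 0, 0, 0, 0, 0, 0, 0;
    0, 0, 0, 0, -1, 0, 0, 0, 0, 0, 0, 0, 0, 0, 0, 0, 0, 0, 0, 0, 0, 0;
    0, 0, 0, 0, 0, 0, 0, 0, 0, 0, 0, 0, 0, 0, 0, 0, 1, 1, -3, 0, 0, 0;
    0, 0, 0, 0, 0, 0, 0, 0, 0, 0, 0, 0, 0, 0, 0, 0, 2, -1, -2, 0, 0, 0;
    0, 0, 0, 0, 0, 0, 0, 0, 0, 0, 0, 0, 0, 0, 1, 0, -2, 0, 3, 0, 0, 0;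
    0, 0, 0, 0, 0, 0, 0, 0, 0, 0, 0, 0, 0, 0, 1, 0, -1, 0, 1, 0, 0, 0]

def pairingLiftS : Matrix (Fin 22) (Fin 5) ℤ :=
  !![0, 0, 0, 0, 0;
    0, 0, 0, 0, 0;
    0, 0, 0, 0, 0;
    0, 0, 0, 0, 0;
    0, 0, 0, 0, 0;
    1, 0, 0, 0, 0;
    0, 0, 0, 0, 0;
    0, 0, 0, 0, 0;
    0, 0, 0, 0, 0;
    0, 0, 0, 0, 0;
    0, 0, 0, 0, 0;
    0, 0, 0, 0, 0;
    0, 0, 0, 0, 0;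
    0, 0, 0, 0, 0;
    0, 0, 0, 0, 0;
    0, 1, -1, 2, 2;
    0, 0, 0, 0, 0;
    0, 0, 0, 0, 0;
    0, 0, 0, 0, 0;
    0, 0, 0, 1, 0;
    0, 0, 0, 0, -1;
    0, 0, 1, -1, -1]

theorem embS_gram : embSᵀ * gramK3 * embS = gramS := by decide

theorem embT_gram : embTᵀ * gramK3 * embT = gramT := by decide

theorem embT_orthogonal_embS : embTᵀ * gramK3 * embS = 0 := by decide

theorem retractS_mul_embS : retractS * embS = 1 := by decide

theorem retractT_mul_embT : retractT * embT = 1 := by decide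

set_option maxHeartbeats 1000000 in
theorem embT_retractT_add_pairingLiftS : embT * retractT + pairingLiftS * (gramK3 * embS)ᵀ = 1 := by
  decide

/-- There is a primitive isometric embedding of `S = A₁(-1) ⊕ A₁⁴` into the K3 lattice,
whose orthogonal complement is isometric to `T = U ⊕ U ⊕ E₈ ⊕ A₁⁵`. -/
theorem S_embeds_primitively_in_K3_with_complement_T :
    ∃ φ : (Fin 5 → ℤ) →ₗ[ℤ] (Fin 22 → ℤ),
      Function.Injective φ ∧
      (∀ x y : Fin 5 → ℤ, (φ x) ⬝ᵥ gramK3.mulVec (φ y) = x ⬝ᵥ gramS.mulVec y) ∧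
      (∀ (x : Fin 22 → ℤ) (c : ℤ), c ≠ 0 → c • x ∈ Set.range φ → x ∈ Set.range φ) ∧
      ∃ ψ : (Fin 17 → ℤ) →ₗ[ℤ] (Fin 22 → ℤ),
        Function.Injective ψ ∧
        Set.range ψ = {x : Fin 22 → ℤ | ∀ z : Fin 5 → ℤ, x ⬝ᵥ gramK3.mulVec (φ z) = 0} ∧
        ∀ x y : Fin 17 → ℤ, (ψ x) ⬝ᵥ gramK3.mulVec (ψ y) = x ⬝ᵥ gramT.mulVec y := by
  refine ⟨mulVecLin embS, mulVec_injective_of_mul_eq_one_s10 retractS_mul_embS, fun x y => ?_,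
    fun x c hc => mem_range_mulVec_of_smul_mem retractS_mul_embS hc, mulVecLin embT,
    mulVec_injective_of_mul_eq_one_s10 retractT_mul_embT,
    range_mulVec_eq_orthogonal retractT pairingLiftS embT_orthogonal_embS
      embT_retractT_add_pairingLiftS, fun x y => ?_⟩
  · rw [mulVecLin_apply, mulVecLin_apply, mulVec_dotProduct_mulVec_mulVec, embS_gram]
  · rw [mulVecLin_apply, mulVecLin_apply, mulVec_dotProduct_mulVec_mulVec, embT_gram]
end
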